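/- Theorem (correctness of Algorithm 1 given convergence): If in some configuration C reachable in an execution of Algorithm 1 we have #ini = 0, then |#r − #b| ≤ 1 and no agent's color changes in any configuration reachable from C. -/

import Mathlib

/-- Agent colors of Algorithm 1. -/
inductive Col : Type
  | ini | r | b
deriving DecidableEq

/-- Base-station variable `RB`. -/
inductive RB : Type
  | r | b
deriving DecidableEq

/-- Flip the base-station variable. -/
def RB.flip : RB → RB
  | .r => .b
  | .b => .r

/-- The color assigned by the base station. -/
def RB.toCol : RB → Col
  | .r => .r
  | .b => .b

/-- An agent state: a color and a depth (`none` is ⊥). -/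
abbrev AgSt := Col × Option ℕ

/-- Effect of an interaction between the base station and one agent. -/
def bsStep (rb : RB) (a : AgSt) : RB × AgSt :=
  match a with
  | (.ini, some 1) => (rb.flip, (rb.toCol, some 1))
  | (c, none)      => (rb, (c, some 1))
  | a              => (rb, a)

/-- Effect of an interaction between two agents x and y:
first the depth propagation, then the color swap towards a smaller depth. -/
def agStep (x y : AgSt) : AgSt × AgSt :=
  let d : Option ℕ × Option ℕ :=
    match x.2, y.2 with
    | none, some e => (some (e + 1), some e)
    | some e, none => (some e, some (e + 1))
    | dx, dy       => (dx, dy)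
  match d with
  | (some dx, some dy) =>
      if dx < dy ∧ y.1 = Col.ini then ((Col.ini, some dx), (x.1, some dy))
      else if dy < dx ∧ x.1 = Col.ini then ((y.1, some dx), (Col.ini, some dy))
      else ((x.1, some dx), (y.1, some dy))
  | (dx, dy) => ((x.1, dx), (y.1, dy))

/-- A configuration: the base-station variable together with the agents' states. -/
abbrev Conf (n : ℕ) := RB × (Fin n → AgSt)

/-- One step of Algorithm 1 on a communication graph: either the base station
interacts with an adjacent agent, or two adjacent distinct agents interact. -/
def Step {n : ℕ} (Adj : Fin n → Fin n → Prop) (BAdj : Fin n → Prop)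
    (c c' : Conf n) : Prop :=
  (∃ i : Fin n, BAdj i ∧ c'.1 = (bsStep c.1 (c.2 i)).1 ∧
      c'.2 = Function.update c.2 i (bsStep c.1 (c.2 i)).2) ∨
  (c'.1 = c.1 ∧ ∃ i j : Fin n, i ≠ j ∧ Adj i j ∧
      c'.2 = Function.update (Function.update c.2 i (agStep (c.2 i) (c.2 j)).1) j
        (agStep (c.2 i) (c.2 j)).2)

/-- Number of agents whose color is `x`. -/
def cnt {n : ℕ} (C : Fin n → AgSt) (x : Col) : ℕ :=
  (Finset.univ.filter fun a => (C a).1 = x).card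

/-! Every reachable configuration satisfies the invariant
`(#r = #b + 1 ∧ RB = b) ∨ (#r = #b ∧ RB = r)`: the base station hands out the colors
`r, b, r, b, …` alternately and flips `RB` each time, while agent–agent interactions only swap
colors. Both kinds of color-changing interaction need an agent of color `ini`, so once `#ini = 0`
no color changes any more. -/

lemma cnt_eq_zero_iff {n : ℕ} (C : Fin n → AgSt) (x : Col) :
    cnt C x = 0 ↔ ∀ v, (C v).1 ≠ x := by
  simp [cnt, Finset.filter_eq_empty_iff]

lemma cnt_update_add {n : ℕ} (C : Fin n → AgSt) (i : Fin n) (a : AgSt) (x : Col) :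
    cnt (Function.update C i a) x + (if (C i).1 = x then 1 else 0) =
      cnt C x + (if a.1 = x then 1 else 0) := by
  simp only [cnt, Finset.card_filter]
  rw [← Finset.add_sum_erase _ _ (Finset.mem_univ i),
    ← Finset.add_sum_erase _ (fun v => if (C v).1 = x then 1 else 0) (Finset.mem_univ i),
    Finset.sum_congr rfl fun v hv => by rw [Function.update_of_ne (Finset.ne_of_mem_erase hv)],
    Function.update_self]
  ring

lemma cnt_congr {n : ℕ} {C C' : Fin n → AgSt} (h : ∀ v, (C' v).1 = (C v).1) (x : Col) :
    cnt C' x = cnt C x := by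
  simp only [cnt, h]

lemma cnt_congr_perm {n : ℕ} {C C' : Fin n → AgSt} (σ : Equiv.Perm (Fin n))
    (h : ∀ v, (C' v).1 = (C (σ v)).1) (x : Col) : cnt C' x = cnt C x :=
  Finset.card_nbij' σ σ.symm (fun v hv => by simpa [h] using hv)
    (fun v hv => by simpa [h] using hv) (fun v _ => σ.symm_apply_apply v)
    (fun v _ => σ.apply_symm_apply v)

lemma bsStep_of_ne {rb : RB} {a : AgSt} (ha : a ≠ (.ini, some 1)) :
    (bsStep rb a).1 = rb ∧ (bsStep rb a).2.1 = a.1 := by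
  obtain ⟨c, d⟩ := a
  cases c <;> rcases d with _ | _ | _ | _ <;> simp_all [bsStep]

lemma agStep_colors (x y : AgSt) :
    ((agStep x y).1.1 = x.1 ∧ (agStep x y).2.1 = y.1) ∨
      ((agStep x y).1.1 = y.1 ∧ (agStep x y).2.1 = x.1 ∧ (x.1 = .ini ∨ y.1 = .ini)) := by
  obtain ⟨cx, dx⟩ := x
  obtain ⟨cy, dy⟩ := y
  cases dx <;> cases dy <;> simp only [agStep] <;> (try split_ifs) <;> simp_all

lemma fst_update_bsStep_of_ne {n : ℕ} (C : Fin n → AgSt) (rb : RB) {i : Fin n}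
    (hi : C i ≠ (.ini, some 1)) (v : Fin n) :
    (Function.update C i (bsStep rb (C i)).2 v).1 = (C v).1 := by
  rcases eq_or_ne v i with rfl | hvi
  · simpa using (bsStep_of_ne hi).2
  · simp [hvi]

lemma fst_update_agStep {n : ℕ} (C : Fin n → AgSt) {i j : Fin n} (hij : i ≠ j) :
    let D := Function.update (Function.update C i (agStep (C i) (C j)).1) j
      (agStep (C i) (C j)).2
    (∀ v, (D v).1 = (C v).1) ∨
      ((∀ v, (D v).1 = (C (Equiv.swap i j v)).1) ∧ ((C i).1 = .ini ∨ (C j).1 = .ini)) := by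
  intro D
  have hD : ∀ v, (D v).1 = if v = j then (agStep (C i) (C j)).2.1
      else if v = i then (agStep (C i) (C j)).1.1 else (C v).1 := by
    intro v
    rcases eq_or_ne v j with rfl | hvj
    · simp [D]
    · rcases eq_or_ne v i with rfl | hvi <;> simp [D, *]
  rcases agStep_colors (C i) (C j) with ⟨hi, hj⟩ | ⟨hi, hj, hini⟩
  · left
    intro v
    rw [hD]
    split_ifs <;> simp_all
  · right
    refine ⟨fun v => ?_, hini⟩
    rw [hD, Equiv.swap_apply_def]
    split_ifs <;> simp_all

section Step

variable {n : ℕ} {Adj : Fin n → Fin n → Prop} {BAdj : Fin n → Prop} {c c' : Conf n}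

def ColorBalance (c : Conf n) : Prop :=
  (cnt c.2 .r = cnt c.2 .b + 1 ∧ c.1 = .b) ∨ (cnt c.2 .r = cnt c.2 .b ∧ c.1 = .r)

lemma Step.colorBalance (h : Step Adj BAdj c c') (hc : ColorBalance c) : ColorBalance c' := by
  rcases h with ⟨i, -, hrb, hc'⟩ | ⟨hrb, i, j, hij, -, hc'⟩
  · by_cases hi : c.2 i = (.ini, some 1)
    · have hr := cnt_update_add c.2 i (c.1.toCol, some 1) .r
      have hb := cnt_update_add c.2 i (c.1.toCol, some 1) .b
      simp only [hi, bsStep] at hrb hc' hr hb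
      unfold ColorBalance at hc ⊢
      rw [hrb, hc']
      cases hrb' : c.1 <;>
        simp only [hrb', RB.toCol, RB.flip, reduceCtorEq, ↓reduceIte, and_true, and_false,
          or_false, false_or, add_zero] at hc hr hb ⊢ <;> omega
    · have hcnt := cnt_congr (fst_update_bsStep_of_ne c.2 c.1 hi)
      unfold ColorBalance at hc ⊢
      rwa [hrb, (bsStep_of_ne hi).1, hc', hcnt, hcnt]
  · have hcnt : ∀ x, cnt c'.2 x = cnt c.2 x := by
      rw [hc']
      rcases fst_update_agStep c.2 hij with hkeep | ⟨hswap, -⟩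
      · exact cnt_congr hkeep
      · exact cnt_congr_perm _ hswap
    unfold ColorBalance at hc ⊢
    rwa [hrb, hcnt, hcnt]

lemma Step.fst_eq_of_forall_ne_ini (h : Step Adj BAdj c c') (hno : ∀ v, (c.2 v).1 ≠ .ini)
    (v : Fin n) : (c'.2 v).1 = (c.2 v).1 := by
  rcases h with ⟨i, -, -, hc'⟩ | ⟨-, i, j, hij, -, hc'⟩
  · have hi : c.2 i ≠ (.ini, some 1) := fun h => hno i (by rw [h])
    rw [hc', fst_update_bsStep_of_ne _ _ hi]
  · rcases fst_update_agStep c.2 hij with hkeep | ⟨-, hini | hini⟩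
    · rw [hc', hkeep]
    · exact absurd hini (hno i)
    · exact absurd hini (hno j)

lemma colorBalance_of_reachable
    (h : Relation.ReflTransGen (Step Adj BAdj) (RB.r, fun _ => (Col.ini, none)) c) :
    ColorBalance c := by
  induction h with
  | refl => exact Or.inr ⟨by simp [cnt], rfl⟩
  | tail _ hstep hc => exact hstep.colorBalance hc

lemma fst_eq_of_reachable_of_forall_ne_ini (h : Relation.ReflTransGen (Step Adj BAdj) c c')
    (hno : ∀ v, (c.2 v).1 ≠ .ini) (v : Fin n) : (c'.2 v).1 = (c.2 v).1 := by
  induction h generalizing v with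
  | refl => rfl
  | tail _ hstep ih =>
    rw [hstep.fst_eq_of_forall_ne_ini (fun w => ih w ▸ hno w), ih]

end Step

theorem stmt15 (n : ℕ) (Adj : Fin n → Fin n → Prop) (BAdj : Fin n → Prop)
    (C : Conf n)
    (hreach : Relation.ReflTransGen (Step Adj BAdj)
      (RB.r, fun _ => (Col.ini, none)) C)
    (hini : cnt C.2 .ini = 0) :
    (cnt C.2 .r ≤ cnt C.2 .b + 1 ∧ cnt C.2 .b ≤ cnt C.2 .r + 1) ∧
    ∀ C', Relation.ReflTransGen (Step Adj BAdj) C C' →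
      ∀ v : Fin n, (C'.2 v).1 = (C.2 v).1 := by
  refine ⟨?_, fun C' h => fst_eq_of_reachable_of_forall_ne_ini h ((cnt_eq_zero_iff _ _).1 hini)⟩
  rcases colorBalance_of_reachable hreach with ⟨h, -⟩ | ⟨h, -⟩ <;> omega
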